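/- arXiv:1412.6171 — 2 statements merged into one kernel-verified Lean document; each statement's English description precedes it below -/
import Mathlib

section
/- (Eklof's Lemma.) Let A be an abelian category and A an object of A. Then the class ⊥1{A} = {X : Ext^1(X, A) = 0} is closed under ⊥1{A}-filtered objects: if an object B is ⊥1{A}-filtered, i.e. 0 → B is the transfinite composition of a λ-sequence X with X_0 = 0 in which each X_α → X_{α+1} (α+1 < λ) is a monomorphism whose cokernel lies in ⊥1{A}, then Ext^1(B, A) = 0. -/
open CategoryTheory CategoryTheory.Limits

universe w v u

namespace CellComplex

variable {C : Type u} [Category.{v} C]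

/-- The inclusion of `Set.Iio g` into `Set.Iio l` for `g ≤ l`, as a functor. -/
def iioFunctor {g l : Ordinal.{w}} (h : g ≤ l) : Set.Iio g ⥤ Set.Iio l :=
  Monotone.functor (f := fun a => (⟨a.1, lt_of_lt_of_le a.2 h⟩ : Set.Iio l))
    (fun _ _ hab => hab)

/-- For `g < l`, the canonical cocone over the restriction of `X : Set.Iio l ⥤ C` to
`Set.Iio g` whose point is `X.obj ⟨g, _⟩`. -/
def coconeAt {l : Ordinal.{w}} (X : Set.Iio l ⥤ C) {g : Ordinal.{w}} (h : g < l) :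
    Cocone (iioFunctor h.le ⋙ X) where
  pt := X.obj ⟨g, h⟩
  ι :=
    { app := fun a => X.map (homOfLE (le_of_lt a.2))
      naturality := fun a b f => by
        dsimp [iioFunctor, Monotone.functor]
        rw [Category.comp_id, ← X.map_comp]
        congr 1 }

/-- A functor `X : Set.Iio l ⥤ C` is a `λ`-sequence if for every limit ordinal `g < l`,
the object `X.obj g` together with the canonical maps is a colimit of the restriction of
`X` to `Set.Iio g`. -/
def IsLambdaSequence {l : Ordinal.{w}} (X : Set.Iio l ⥤ C) : Prop :=
  ∀ (g : Ordinal.{w}) (h : g < l), Order.IsSuccLimit g → Nonempty (IsColimit (coconeAt X h))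

/-- The canonical morphism in the preorder category `Set.Iio l` from `a` to `a + 1`. -/
def toSucc {l : Ordinal.{w}} (a : Ordinal.{w}) (ha : a + 1 < l) :
    (⟨a, (lt_add_one a).trans ha⟩ : Set.Iio l) ⟶ (⟨a + 1, ha⟩ : Set.Iio l) :=
  homOfLE (le_of_lt (lt_add_one a))

/-- All the successor maps of the sequence `X` satisfy the property `P`. -/
def SuccMapsIn (P : MorphismProperty C) {l : Ordinal.{w}} (X : Set.Iio l ⥤ C) : Prop :=
  ∀ (a : Ordinal.{w}) (ha : a + 1 < l), P (X.map (toSucc a ha))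

/-- `f : A ⟶ B` is a transfinite composition of a `λ`-sequence whose successor maps
satisfy `P`: there is such a sequence starting (up to isomorphism) at `A`, having a
colimit cocone whose point is isomorphic to `B` compatibly with `f`. -/
def IsTransCompOf (P : MorphismProperty C) {A B : C} (f : A ⟶ B) : Prop :=
  ∃ (l : Ordinal.{w}) (hl : 0 < l) (X : Set.Iio l ⥤ C),
    IsLambdaSequence X ∧ SuccMapsIn P X ∧
      ∃ (c : Cocone X) (_ : IsColimit c) (e₀ : A ≅ X.obj ⟨0, hl⟩) (e₁ : c.pt ≅ B),
        f = e₀.hom ≫ c.ι.app ⟨0, hl⟩ ≫ e₁.hom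

/-- `f` is a pushout of some morphism satisfying `I`, i.e. `f` is the parallel side of a
pushout square whose other side is a morphism of `I`. -/
def IsPushoutOfIn (I : MorphismProperty C) {X Y : C} (f : X ⟶ Y) : Prop :=
  ∃ (A B : C) (d : A ⟶ B) (g : A ⟶ X) (h : B ⟶ Y), I d ∧ IsPushout d g h f

/-- The class of pushouts of morphisms in `I`. -/
def pushouts (I : MorphismProperty C) : MorphismProperty C :=
  fun _ _ f => IsPushoutOfIn I f

/-- Transfinite compositions of pushouts of morphisms in `I` exist: pushouts of
morphisms of `I` along arbitrary morphisms exist, and every `λ`-sequence whose successor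
maps are pushouts of morphisms of `I` has a colimit. -/
def HasTransfiniteCompositionsOfPushouts (I : MorphismProperty C) : Prop :=
  (∀ ⦃A B : C⦄ (d : A ⟶ B), I d → ∀ ⦃X : C⦄ (g : A ⟶ X),
      ∃ (Y : C) (h : B ⟶ Y) (f : X ⟶ Y), IsPushout d g h f) ∧
    (∀ (l : Ordinal.{w}) (X : Set.Iio l ⥤ C), IsLambdaSequence X →
      SuccMapsIn (pushouts I) X → HasColimit X)

/-- The class `I`-cell of relative `I`-cell complexes: transfinite compositions of
pushouts of morphisms of `I`. -/
def cell (I : MorphismProperty C) : MorphismProperty C :=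
  fun _ _ f => IsTransCompOf.{w} (pushouts I) f

/-- The class `I`-inj of morphisms having the right lifting property with respect to
every morphism of `I`. -/
def inj (I : MorphismProperty C) : MorphismProperty C :=
  fun _ _ p => ∀ ⦃A B : C⦄ (i : A ⟶ B), I i → HasLiftingProperty i p

/-- The class `I`-cof of morphisms having the left lifting property with respect to
every morphism of `I`-inj. -/
def cof (I : MorphismProperty C) : MorphismProperty C :=
  fun _ _ i => ∀ ⦃X Y : C⦄ (p : X ⟶ Y), inj I p → HasLiftingProperty i p

/-- Coproducts of set-indexed families of morphisms in `I` exist: for every set-indexed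
family of morphisms of `I`, the coproducts of the domains and of the codomains exist. -/
def HasCoproductsOfMorphisms (I : MorphismProperty C) : Prop :=
  ∀ (S : Type w) (A B : S → C) (i : ∀ s, A s ⟶ B s), (∀ s, I (i s)) →
    HasCoproduct A ∧ HasCoproduct B

/-- An object `A` is `κ`-small relative to a class `D` of morphisms: for every ordinal
`l` of cofinality `> κ` and every `λ`-sequence with successor maps in `D` admitting a
colimit, the canonical map `colimᵢ Hom(A, Xᵢ) ⟶ Hom(A, colimᵢ Xᵢ)` is bijective, i.e.
every morphism from `A` to the colimit factors through some stage, and any two morphisms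
to a stage which agree in the colimit agree at some later stage. -/
def IsSmallRelativeTo (κ : Cardinal.{w}) (D : MorphismProperty C) (A : C) : Prop :=
  ∀ (l : Ordinal.{w}), κ < l.cof → ∀ (X : Set.Iio l ⥤ C), IsLambdaSequence X →
    SuccMapsIn D X → ∀ (c : Cocone X), IsColimit c →
      ((∀ u : A ⟶ c.pt, ∃ (a : Set.Iio l) (v : A ⟶ X.obj a), v ≫ c.ι.app a = u) ∧
        (∀ (a : Set.Iio l) (v₁ v₂ : A ⟶ X.obj a), v₁ ≫ c.ι.app a = v₂ ≫ c.ι.app a →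
          ∃ (b : Set.Iio l) (hab : a ≤ b),
            v₁ ≫ X.map (homOfLE hab) = v₂ ≫ X.map (homOfLE hab)))

/-- The set `I` of morphisms admits the small object argument: (i) transfinite
compositions of pushouts of morphisms in `I` exist, (ii) coproducts of set-indexed
families of morphisms in `I` exist, and (iii) the domains of the morphisms of `I` are
small relative to `I`-cell. -/
def AdmitsSmallObjectArgument (I : MorphismProperty C) : Prop :=
  HasTransfiniteCompositionsOfPushouts.{w} I ∧ HasCoproductsOfMorphisms.{w} I ∧
    ∀ ⦃A B : C⦄ (i : A ⟶ B), I i →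
      ∃ κ : Cardinal.{w}, IsSmallRelativeTo κ (cell.{w} I) A

section AbelianComplete

open ZeroObject

variable {C : Type u} [Category.{v} C] [Abelian C]

/-- `0 → A → B → C' → 0` is a short exact sequence. -/
def IsShortExact {A B C' : C} (f : A ⟶ B) (g : B ⟶ C') : Prop :=
  ∃ w : f ≫ g = 0, (ShortComplex.mk f g w).ShortExact

/-- `Ext¹(X, A) = 0`, expressed by the vanishing of the Yoneda Ext group: every short
exact sequence `0 → A → E → X → 0` splits. -/
def Ext1Zero (X A : C) : Prop :=
  ∀ ⦃E : C⦄ (f : A ⟶ E) (g : E ⟶ X), IsShortExact f g → ∃ s : X ⟶ E, s ≫ g = 𝟙 X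

/-- The right `Ext¹`-orthogonal `S^⊥₁` of a class of objects `S`. -/
def rightPerp (S : Set C) : Set C := {Y | ∀ X ∈ S, Ext1Zero X Y}

/-- The left `Ext¹`-orthogonal `⊥₁S` of a class of objects `S`. -/
def leftPerp (S : Set C) : Set C := {X | ∀ Y ∈ S, Ext1Zero X Y}

/-- The class of monomorphisms whose cokernel is isomorphic to an object of `S`. -/
def monoWithCokerIn (S : Set C) : MorphismProperty C :=
  fun _ _ f => Mono f ∧ ∃ W ∈ S, Nonempty (cokernel f ≅ W)

/-- `B` is `S`-filtered: `0 → B` is the transfinite composition of a `λ`-sequence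
starting at `0` whose successor maps are monomorphisms with cokernel isomorphic to an
object of `S`. -/
def IsSFiltered (S : Set C) (B : C) : Prop :=
  ∃ (l : Ordinal.{w}) (hl : 0 < l) (X : Set.Iio l ⥤ C),
    IsLambdaSequence X ∧ SuccMapsIn (monoWithCokerIn S) X ∧ IsZero (X.obj ⟨0, hl⟩) ∧
      ∃ (c : Cocone X) (_ : IsColimit c), Nonempty (c.pt ≅ B)

/-- `Cell(I)`: the objects `A` such that `0 ⟶ A` is a relative `I`-cell complex. -/
def CellObjects (I : MorphismProperty C) : Set C :=
  {A | cell.{w} I (0 : (0 : C) ⟶ A)}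

/-- `Cok I`: the objects isomorphic to the cokernel of some morphism of `I`. -/
def CokObjects (I : MorphismProperty C) : Set C :=
  {A | ∃ (X Y : C) (i : X ⟶ Y), I i ∧ Nonempty (A ≅ cokernel i)}

/-- `I` is homological: whenever `A ⟶ 0` lies in `I`-inj, `A ∈ (Cok I)^⊥₁`. -/
def IsHomological (I : MorphismProperty C) : Prop :=
  ∀ A : C, inj I (0 : A ⟶ (0 : C)) → A ∈ rightPerp (CokObjects I)

/-- `(𝒳, 𝒴)` is a cotorsion pair: `𝒳 = ⊥₁𝒴` and `𝒴 = 𝒳^⊥₁`. -/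
def IsCotorsionPair (𝒳 𝒴 : Set C) : Prop :=
  𝒳 = leftPerp 𝒴 ∧ 𝒴 = rightPerp 𝒳

/-- The cotorsion pair `(𝒳, 𝒴)` is complete: it is a cotorsion pair with enough
projectives and enough injectives. -/
def IsCompleteCotorsionPair (𝒳 𝒴 : Set C) : Prop :=
  IsCotorsionPair 𝒳 𝒴 ∧
    (∀ A : C, ∃ (Y₀ X₀ : C) (f : Y₀ ⟶ X₀) (g : X₀ ⟶ A),
      IsShortExact f g ∧ X₀ ∈ 𝒳 ∧ Y₀ ∈ 𝒴) ∧
    (∀ A : C, ∃ (Y₀ X₀ : C) (f : A ⟶ Y₀) (g : Y₀ ⟶ X₀),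
      IsShortExact f g ∧ X₀ ∈ 𝒳 ∧ Y₀ ∈ 𝒴)

/-- `T` is a class of generators: every object admits an epimorphism from a coproduct of
a set-indexed family of objects of `T`. -/
def IsGeneratingClass (T : Set C) : Prop :=
  ∀ A : C, ∃ (S : Type w) (G : S → C) (_ : ∀ s, G s ∈ T)
    (c : Cofan G) (_ : IsColimit c) (p : c.pt ⟶ A), Epi p

/-- `T` is closed under (set-indexed) coproducts: coproducts of families of objects of
`T` exist and belong to `T`. -/
def ClosedUnderCoproducts (T : Set C) : Prop :=
  ∀ (S : Type w) (A : S → C), (∀ s, A s ∈ T) →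
    ∃ (c : Cofan A) (_ : IsColimit c), c.pt ∈ T

/-- `T` is closed under extensions. -/
def ClosedUnderExtensions (T : Set C) : Prop :=
  ∀ ⦃A B C' : C⦄ (f : A ⟶ B) (g : B ⟶ C'),
    IsShortExact f g → A ∈ T → C' ∈ T → B ∈ T

/-- `A` is a direct summand of `B`. -/
def IsDirectSummandOf (A B : C) : Prop :=
  ∃ (s : A ⟶ B) (r : B ⟶ A), s ≫ r = 𝟙 A

end AbelianComplete

/-! A short exact sequence `0 ⟶ A ⟶ E ⟶ B ⟶ 0` with epimorphism `g : E ⟶ B` splits as soon as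
`0 ⟶ B` has the left lifting property against `g`. A monomorphism `i` with
`Ext¹(coker i, ker g) = 0` (and `ker g ≅ A`) has this lifting property: pulling `g` back along
the bottom of a square reduces it to finding a section `σ` of an epimorphism `p : P ⟶ Y` with
`i ≫ σ = k` for a given `k` with `k ≫ p = i`, and such a section comes from a retraction of
`ker p ⟶ P` vanishing on `k`, i.e. from a splitting of the extension
`0 ⟶ ker p ⟶ coker k ⟶ coker i ⟶ 0`. Since left lifting properties are stable under transfinite
composition, the filtration of `B` then gives the lift of `0 ⟶ B`. -/

section LambdaSequence

variable {l : Ordinal.{w}}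

-- Chosen so that `(iioPrincipalSeg h).cocone X` is definitionally `coconeAt X h`.
def iioPrincipalSeg {g : Ordinal.{w}} (h : g < l) : Set.Iio g <i Set.Iio l where
  top := ⟨g, h⟩
  toFun a := ⟨a.1, a.2.trans h⟩
  inj' _ _ h := Subtype.ext congr($h.1)
  map_rel_iff' := Iff.rfl
  mem_range_iff_rel' b := ⟨by rintro ⟨a, rfl⟩; exact a.2, fun hb => ⟨⟨b.1, hb⟩, rfl⟩⟩

lemma IsLambdaSequence.isWellOrderContinuous {X : Set.Iio l ⥤ C} (hX : IsLambdaSequence X) :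
    X.IsWellOrderContinuous where
  nonempty_isColimit m hm := by
    obtain ⟨hc⟩ := hX m.1 m.2 ((Set.principalSegIio l).isSuccLimit_apply_iff.2 hm)
    exact ⟨(IsColimit.whiskerEquivalenceEquiv
      (iioPrincipalSeg m.2).orderIsoIio.equivalence).symm hc⟩

lemma SuccMapsIn.map_le_succ {P : MorphismProperty C} {X : Set.Iio l ⥤ C}
    (hX : SuccMapsIn P X) (j : Set.Iio l) (hj : ¬IsMax j) :
    P (X.map (homOfLE (Order.le_succ j))) := by
  have key : ∀ (k : Set.Iio l) (hk : k.1 = j.1 + 1) (hjk : j ≤ k), P (X.map (homOfLE hjk)) := by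
    rintro ⟨_, hk⟩ rfl _
    exact hX j.1 hk
  refine key _ ?_ _
  have hmem : Order.succ j.1 ∈ Set.Iio l := by
    by_contra h
    exact hj (succ_notMem_iff_isMax.1 h)
  rw [coe_succ_of_mem hmem, Order.succ_eq_add_one]

end LambdaSequence

section Abelian

variable [Abelian C]

lemma IsShortExact.of_iso {A A' E X X' : C} (eA : A ≅ A') (eX : X ≅ X') {f : A' ⟶ E}
    {g : E ⟶ X'} (h : IsShortExact f g) : IsShortExact (eA.hom ≫ f) (g ≫ eX.inv) := by
  obtain ⟨w, hS⟩ := h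
  refine ⟨by simp [reassoc_of% w], ShortComplex.shortExact_of_iso ?_ hS⟩
  exact ShortComplex.isoMk eA.symm (Iso.refl E) eX.symm (by simp) (by simp)

lemma Ext1Zero.of_iso {X X' A A' : C} (eX : X ≅ X') (eA : A ≅ A') (h : Ext1Zero X A) :
    Ext1Zero X' A' := by
  intro E f g hfg
  obtain ⟨s, hs⟩ := h (eA.hom ≫ f) (g ≫ eX.inv) (hfg.of_iso eA eX)
  refine ⟨eX.inv ≫ s, ?_⟩
  rw [← cancel_mono eX.inv]
  simp [hs]

open kernelCokernelCompSequence in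
lemma exists_section_comp_eq_of_ext1Zero {X P Y : C} {i : X ⟶ Y} [Mono i] (k : X ⟶ P)
    (p : P ⟶ Y) [Epi p] (hk : k ≫ p = i) (h : Ext1Zero (cokernel i) (kernel p)) :
    ∃ σ : Y ⟶ P, i ≫ σ = k ∧ σ ≫ p = 𝟙 Y := by
  subst hk
  -- exactness of `0 = ker (k ≫ p) ⟶ ker p ⟶ coker k ⟶ coker (k ≫ p) ⟶ coker p = 0`
  have hE := kernelCokernelCompSequence_exact k p
  have hδ : Mono (δ k p) := (hE.exact 1).mono_g ((isZero_kernel_of_mono (k ≫ p)).eq_of_src _ _)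
  have hS : (ShortComplex.mk (δ k p) (cokernel.map k (k ≫ p) (𝟙 _) p (by simp)) _).Exact :=
    hE.exact 2
  have : Epi (cokernel.map k (k ≫ p) (𝟙 _) p (by simp)) :=
    (hE.exact 3).epi_f ((isZero_cokernel_of_epi p).eq_of_tgt _ _)
  obtain ⟨s, hs⟩ := h _ _ ⟨_, ⟨hS⟩⟩
  let split := ShortComplex.Splitting.ofExactOfSection _ hS s hs hδ
  let τ : P ⟶ kernel p := cokernel.π k ≫ split.r
  have hkτ : k ≫ τ = 0 := by simp [τ]
  have hιτ : kernel.ι p ≫ τ = -𝟙 _ := by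
    simpa [τ, δ_fac, neg_eq_iff_eq_neg] using split.f_r
  let σ := Abelian.epiDesc p (𝟙 P + τ ≫ kernel.ι p) (by simp [reassoc_of% hιτ])
  have hpσ : p ≫ σ = 𝟙 P + τ ≫ kernel.ι p := Abelian.comp_epiDesc _ _ _
  refine ⟨σ, by simp [hpσ, reassoc_of% hkτ], ?_⟩
  rw [← cancel_epi p, reassoc_of% hpσ]
  simp

lemma hasLiftingProperty_of_ext1Zero {X Y E B : C} (i : X ⟶ Y) (g : E ⟶ B) [Mono i] [Epi g]
    (h : Ext1Zero (cokernel i) (kernel g)) : HasLiftingProperty i g where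
  sq_hasLift {t u} sq := by
    have := isIso_kernel_map_of_isPullback (IsPullback.of_hasPullback g u).flip
    have hker : kernel (pullback.snd g u) ≅ kernel g :=
      asIso (kernel.map _ _ (pullback.fst g u) u pullback.condition.symm)
    obtain ⟨σ, hσ, hσp⟩ := exists_section_comp_eq_of_ext1Zero (pullback.lift t i sq.w)
      (pullback.snd g u) (pullback.lift_snd _ _ _) (h.of_iso (Iso.refl _) hker.symm)
    exact ⟨⟨{ l := σ ≫ pullback.fst g u
              fac_left := by rw [reassoc_of% hσ, pullback.lift_fst]
              fac_right := by simp [pullback.condition, reassoc_of% hσp] }⟩⟩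

end Abelian

/-- **Eklof's Lemma.** In an abelian category, the class
`⊥₁{A} = {X : Ext¹(X, A) = 0}` is closed under `⊥₁{A}`-filtered objects: if `B` is
`⊥₁{A}`-filtered then `Ext¹(B, A) = 0`. -/
theorem eklof {C : Type u} [Category.{v} C] [Abelian C] (A B : C)
    (hB : IsSFiltered.{w} {X : C | Ext1Zero X A} B) : Ext1Zero B A := by
  obtain ⟨l, hl, X, hX, hsucc, hX0, c, hc, ⟨e⟩⟩ := hB
  intro E f g ⟨_, hfg⟩
  have := hfg.mono_f
  have := hfg.epi_g
  have hA : A ≅ kernel g := hfg.exact.fIsKernel.conePointUniqueUpToIso (limit.isLimit _)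
  let _ : OrderBot (Set.Iio l) := Subtype.orderBot hl
  have := hX.isWellOrderContinuous
  have : HasLiftingProperty (c.ι.app ⊥) g :=
    HasLiftingProperty.transfiniteComposition.hasLiftingProperty_ι_app_bot hc fun j hj => by
      obtain ⟨_, W, hW, ⟨eW⟩⟩ := hsucc.map_le_succ j hj
      exact hasLiftingProperty_of_ext1Zero _ _ (hW.of_iso eW.symm hA)
  have sq : CommSq 0 (c.ι.app ⊥) g e.hom := ⟨hX0.eq_of_src _ _⟩
  exact ⟨e.inv ≫ sq.lift, by simp⟩

end CellComplex
end

section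
/- Let A be an abelian category and I a set of monomorphisms in A that admits the small object argument. Then Cell(I) ⊆ Filt-Cok I: every I-cell complex is a Cok I-filtered object. -/
/-!
In an abelian category a pushout of a monomorphism `d` is again a monomorphism, with
cokernel isomorphic to that of `d`. Hence the `λ`-sequence presenting an `I`-cell complex
`0 → A` is already a `Cok I`-filtration of `A`.
-/

open CategoryTheory CategoryTheory.Limits

universe w v u

namespace CellComplex

variable {C : Type u} [Category.{v} C]

section

variable {C : Type u} [Category.{v} C]

theorem SuccMapsIn.mono {P Q : MorphismProperty C} (hPQ : P ≤ Q) {l : Ordinal.{w}}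
    {X : Set.Iio l ⥤ C} (hX : SuccMapsIn P X) : SuccMapsIn Q X :=
  fun a ha => hPQ _ (hX a ha)

end

section

variable {C : Type u} [Category.{v} C] [Abelian C]

theorem pushouts_le_monoWithCokerIn {I : MorphismProperty C}
    (hmono : ∀ ⦃X Y : C⦄ (i : X ⟶ Y), I i → Mono i) :
    pushouts I ≤ monoWithCokerIn (CokObjects I) := by
  rintro X Y f ⟨A, B, d, g, h, hd, sq⟩
  have := hmono d hd
  have := isIso_cokernel_map_of_isPushout sq
  exact ⟨Abelian.mono_inr_of_isColimit d g sq.isColimit, cokernel d,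
    ⟨A, B, d, hd, ⟨Iso.refl _⟩⟩,
    ⟨(asIso (cokernel.map d f g h sq.w)).symm⟩⟩

theorem IsTransCompOf.isSFiltered {P : MorphismProperty C} {S : Set C}
    (hP : P ≤ monoWithCokerIn S) {Z A : C} (hZ : IsZero Z) {f : Z ⟶ A}
    (hf : IsTransCompOf.{w} P f) : IsSFiltered.{w} S A := by
  obtain ⟨l, hl, X, hseq, hsucc, c, hc, e₀, e₁, -⟩ := hf
  exact ⟨l, hl, X, hseq, hsucc.mono hP, hZ.of_iso e₀.symm, c, hc, ⟨e₁⟩⟩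

end

theorem cellObjects_subset_filtered_general {C : Type u} [Category.{v} C] [Abelian C]
    (I : MorphismProperty C) (hmono : ∀ ⦃X Y : C⦄ (i : X ⟶ Y), I i → Mono i) :
    ∀ A ∈ CellObjects.{w} I, IsSFiltered.{w} (CokObjects I) A :=
  fun _ hA => IsTransCompOf.isSFiltered (pushouts_le_monoWithCokerIn hmono) (isZero_zero C) hA

/-- If `I` is a set of monomorphisms of an abelian category admitting
the small object argument, then `Cell(I) ⊆ Filt-Cok I`: every `I`-cell complex is a
`Cok I`-filtered object. -/
theorem cellObjects_subset_filtered {C : Type u} [Category.{v} C] [Abelian C]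
    (I : MorphismProperty C) (hmono : ∀ ⦃X Y : C⦄ (i : X ⟶ Y), I i → Mono i)
    (hI : AdmitsSmallObjectArgument.{w} I) :
    ∀ A ∈ CellObjects.{w} I, IsSFiltered.{w} (CokObjects I) A :=
  cellObjects_subset_filtered_general I hmono

end CellComplex
end
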